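/- arXiv:1811.08137 — 2 statements merged into one kernel-verified Lean document; each statement's English description precedes it below -/
import Mathlib

section
/- For every p ∈ (1,∞) the Riesz potential I_{(p−1)/p} does not map L_1 to L_p: there exists a real-valued martingale F adapted to (ℱ_n) with sup_n E|F_n| ≤ 2 such that sup_{N ≥ 1} ‖Σ_{n=1}^N m^{−((p−1)/p)·n}·f_n‖_{L_p(P)} = +∞. -/
open MeasureTheory ENNReal NNReal

noncomputable section

namespace MartingaleModel

/-- The cylinder in `ℕ → Fin m` determined by a word `w` of length `n`. -/
def cyl (m n : ℕ) (w : Fin n → Fin m) : Set (ℕ → Fin m) :=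
  {x | ∀ i : Fin n, x (i : ℕ) = w i}

/-- `F` is adapted: `F n` depends only on the first `n` coordinates. -/
def AdaptedFun (m : ℕ) {E : Type*} (F : ℕ → (ℕ → Fin m) → E) : Prop :=
  ∀ n (x y : ℕ → Fin m), (∀ i < n, x i = y i) → F n x = F n y

/-- `F` is a martingale for the uniform `m`-adic filtration:
adapted, and each value is the average of the values on the children. -/
def IsMartingaleFun (m : ℕ) {E : Type*} [AddCommGroup E] [Module ℝ E]
    (F : ℕ → (ℕ → Fin m) → E) : Prop :=
  AdaptedFun m F ∧
    ∀ n (x : ℕ → Fin m), (m : ℝ) • F n x = ∑ j : Fin m, F (n + 1) (Function.update x n j)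

/-- Partial sums of the Riesz potential `I_α` applied to the martingale `F`,
`(I_α F)_N = ∑_{n=1}^N m^{-α n} f_n` where `f_n = F_n - F_{n-1}`. -/
def rieszSum (m : ℕ) {E : Type*} [AddCommGroup E] [Module ℝ E] (α : ℝ)
    (F : ℕ → (ℕ → Fin m) → E) (N : ℕ) (x : ℕ → Fin m) : E :=
  ∑ n ∈ Finset.Icc 1 N, ((m : ℝ) ^ (-(α * n)) : ℝ) • (F n x - F (n - 1) x)

end MartingaleModel

open MartingaleModel

/-!
The extremal martingale is `F_n = m^n 𝟙{x_0 = ⋯ = x_{n-1} = 0}`, with `E|F_n| = 1`. On the set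
`B_j` of sequences with exactly `j` leading zeros, of measure `≥ m^{-(j+1)}`, it equals `m^n` up
to time `j` and vanishes afterwards, so for `N > j` the Riesz sum there is
`(1 - 1/m) ∑_{n ≤ j} r^n - r^{j+1}/m` with `r = m^{1/p} < m`, which is `≳ r^{j+1}`.
Since `r^p = m`, every `B_j` with `j < N` (and `j` not too small) contributes a fixed amount
to `E|(I F)_N|^p`, which therefore grows linearly in `N`.
-/

open Filter Function Topology

theorem Real.rpow_neg_mul_mul_pow {a : ℝ} (ha : 0 < a) (α : ℝ) (n : ℕ) :
    a ^ (-(α * n)) * a ^ n = (a ^ (1 - α)) ^ n := by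
  rw [← Real.rpow_natCast, ← Real.rpow_add ha, ← Real.rpow_mul_natCast ha.le]
  ring_nf

theorem geom_sum_Icc_one {s : ℝ} (hs : s ≠ 1) (j : ℕ) :
    ∑ n ∈ Finset.Icc 1 j, s ^ n = (s ^ (j + 1) - s) / (s - 1) := by
  rw [← Finset.Ico_add_one_right_eq_Icc, geom_sum_Ico hs (by omega), pow_one]

/-- The right-hand side equals `A s^{j+1} - B` with `A = (a - s) / (a (s - 1)) > 0`, so it
eventually dominates `(A / 2) s^{j+1}`. -/
theorem exists_pos_eventually_mul_pow_le {s a : ℝ} (hs : 1 < s) (hsa : s < a) :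
    ∃ c > 0, ∀ᶠ j in atTop,
      c * s ^ (j + 1) ≤ (1 - 1 / a) * ∑ n ∈ Finset.Icc 1 j, s ^ n - s ^ (j + 1) / a := by
  have hs1 : 0 < s - 1 := by linarith
  have has : 0 < a - s := by linarith
  have ha : 0 < a := by linarith
  refine ⟨(a - s) / (2 * a * (s - 1)), by positivity, ?_⟩
  filter_upwards [((tendsto_pow_atTop_atTop_of_one_lt hs).comp (tendsto_add_atTop_nat 1)
    ).eventually_ge_atTop (2 * (a - 1) * s / (a - s))] with j hj
  rw [comp_apply, div_le_iff₀ has] at hj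
  rw [geom_sum_Icc_one hs.ne', ← sub_nonneg]
  have key : (1 - 1 / a) * ((s ^ (j + 1) - s) / (s - 1)) - s ^ (j + 1) / a
      - (a - s) / (2 * a * (s - 1)) * s ^ (j + 1)
      = ((a - s) * s ^ (j + 1) - 2 * (a - 1) * s) / (2 * a * (s - 1)) := by
    field_simp
    ring
  rw [key]
  exact div_nonneg (by linarith) (by positivity)

theorem ENNReal.ofReal_mul_pow_rpow {c s p : ℝ} (hc : 0 ≤ c) (hs : 0 ≤ s) (hp : 0 ≤ p) (k : ℕ) :
    ENNReal.ofReal (c * s ^ k) ^ p = ENNReal.ofReal c ^ p * ENNReal.ofReal (s ^ p) ^ k := by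
  rw [ENNReal.ofReal_mul hc, ENNReal.mul_rpow_of_nonneg _ _ hp, ENNReal.ofReal_pow hs,
    ← ENNReal.ofReal_rpow_of_nonneg hs hp, ← ENNReal.rpow_natCast, ← ENNReal.rpow_natCast,
    ← ENNReal.rpow_mul, ← ENNReal.rpow_mul, mul_comm (k : ℝ) p]

theorem MeasureTheory.sum_setLIntegral_le_lintegral {α β : Type*} [MeasurableSpace α]
    {μ : Measure α} {t : β → Set α} (hd : Pairwise (Disjoint on t))
    (ht : ∀ b, MeasurableSet (t b)) (s : Finset β) (f : α → ℝ≥0∞) :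
    ∑ b ∈ s, ∫⁻ x in t b, f x ∂μ ≤ ∫⁻ x, f x ∂μ :=
  (lintegral_biUnion_finset (hd.set_pairwise _) (fun b _ => ht b) f).symm.trans_le
    (setLIntegral_le_lintegral _ _)

namespace MartingaleModel

section rieszSum

variable {m : ℕ} {E : Type*} [AddCommGroup E] [Module ℝ E] (α : ℝ)
  (F : ℕ → (ℕ → Fin m) → E) (x : ℕ → Fin m)

theorem rieszSum_succ (N : ℕ) :
    rieszSum m α F (N + 1) x =
      rieszSum m α F N x + (m : ℝ) ^ (-(α * (N + 1 : ℕ))) • (F (N + 1) x - F N x) := by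
  rw [rieszSum, rieszSum, Finset.sum_Icc_succ_top (by omega), Nat.add_sub_cancel]

theorem rieszSum_eq_of_le {K N : ℕ} (hF : ∀ n, K < n → F n x = F (n - 1) x) (hKN : K ≤ N) :
    rieszSum m α F N x = rieszSum m α F K x := by
  induction N, hKN using Nat.le_induction with
  | base => rfl
  | succ N hKN ih => rw [rieszSum_succ, ih, hF (N + 1) (by omega), Nat.add_sub_cancel, sub_self,
      smul_zero, add_zero]

end rieszSum

variable {m : ℕ}

theorem measurableSet_cyl (n : ℕ) (w : Fin n → Fin m) : MeasurableSet (cyl m n w) := by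
  rw [cyl, Set.ofPred_forall]
  exact .iInter fun i => (measurableSet_singleton (w i)).preimage (measurable_pi_apply _)

theorem mem_cyl_congr {n : ℕ} {w : Fin n → Fin m} {x y : ℕ → Fin m}
    (h : ∀ i < n, x i = y i) : x ∈ cyl m n w ↔ y ∈ cyl m n w :=
  forall_congr' fun i => by rw [h i i.isLt]

variable [NeZero m]

theorem antitone_cyl_zero : Antitone fun n => cyl m n 0 :=
  fun _ _ hkn _ hx i => hx ⟨i, i.isLt.trans_le hkn⟩

theorem update_mem_cyl_succ_zero_iff {n : ℕ} {x : ℕ → Fin m} {j : Fin m} :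
    update x n j ∈ cyl m (n + 1) 0 ↔ x ∈ cyl m n 0 ∧ j = 0 := by
  simp only [cyl, Set.mem_ofPred_eq, Fin.forall_fin_succ', Fin.val_castSucc, Fin.val_last,
    update_self, Pi.zero_apply]
  refine and_congr (forall_congr' fun i => ?_) Iff.rfl
  rw [update_of_ne i.isLt.ne]

/-- The `m`-adic approximations of the point mass at the zero sequence. -/
def diracMartingale (m : ℕ) [NeZero m] (n : ℕ) : (ℕ → Fin m) → ℝ :=
  (cyl m n 0).indicator fun _ => (m : ℝ) ^ n

theorem isMartingaleFun_diracMartingale : IsMartingaleFun m (diracMartingale m) := by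
  classical
  refine ⟨fun n x y h => ?_, fun n x => ?_⟩
  · unfold diracMartingale
    rw [Set.indicator_apply, Set.indicator_apply, if_congr (mem_cyl_congr h) rfl rfl]
  · unfold diracMartingale
    simp only [Set.indicator_apply, update_mem_cyl_succ_zero_iff]
    by_cases hx : x ∈ cyl m n 0 <;> simp [hx, pow_succ, mul_comm]

theorem eLpNorm_one_diracMartingale {P : Measure (ℕ → Fin m)}
    (hPcyl : ∀ (n : ℕ) (w : Fin n → Fin m), P (cyl m n w) = (m : ℝ≥0∞)⁻¹ ^ n) (n : ℕ) :
    eLpNorm (diracMartingale m n) 1 P = 1 := by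
  rw [diracMartingale, eLpNorm_indicator_const (measurableSet_cyl _ _) one_ne_zero one_ne_top,
    hPcyl]
  simp [← mul_pow, ENNReal.mul_inv_cancel (NeZero.ne _)]

def leadingZerosEq (m : ℕ) [NeZero m] (j : ℕ) : Set (ℕ → Fin m) :=
  cyl m j 0 \ cyl m (j + 1) 0

theorem measurableSet_leadingZerosEq (j : ℕ) : MeasurableSet (leadingZerosEq m j) :=
  (measurableSet_cyl _ _).diff (measurableSet_cyl _ _)

theorem mem_cyl_zero_iff_of_mem_leadingZerosEq {j n : ℕ} {x : ℕ → Fin m}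
    (hx : x ∈ leadingZerosEq m j) : x ∈ cyl m n 0 ↔ n ≤ j :=
  ⟨fun hn => not_lt.1 fun hjn => hx.2 (antitone_cyl_zero hjn hn),
    fun hnj => antitone_cyl_zero hnj hx.1⟩

theorem pairwise_disjoint_leadingZerosEq : Pairwise (Disjoint on leadingZerosEq m) := by
  intro i j hij
  refine Set.disjoint_left.2 fun x hi hj => hij (le_antisymm ?_ ?_)
  · exact (mem_cyl_zero_iff_of_mem_leadingZerosEq hj).1
      ((mem_cyl_zero_iff_of_mem_leadingZerosEq hi).2 le_rfl)
  · exact (mem_cyl_zero_iff_of_mem_leadingZerosEq hi).1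
      ((mem_cyl_zero_iff_of_mem_leadingZerosEq hj).2 le_rfl)

theorem inv_pow_le_measure_leadingZerosEq (hm : 1 < m) {P : Measure (ℕ → Fin m)}
    (hPcyl : ∀ (n : ℕ) (w : Fin n → Fin m), P (cyl m n w) = (m : ℝ≥0∞)⁻¹ ^ n) (j : ℕ) :
    (m : ℝ≥0∞)⁻¹ ^ (j + 1) ≤ P (leadingZerosEq m j) := by
  let w : Fin (j + 1) → Fin m := update 0 (Fin.last j) ⟨1, hm⟩
  refine (hPcyl _ w).symm.trans_le (measure_mono fun x hx => ⟨fun i => ?_, fun h0 => ?_⟩)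
  · exact (hx i.castSucc).trans (update_of_ne (Fin.castSucc_ne_last i) _ _)
  · have := (hx (Fin.last j)).symm.trans (h0 (Fin.last j))
    simp [w, Fin.ext_iff] at this

theorem diracMartingale_apply_of_mem_leadingZerosEq {j : ℕ} {x : ℕ → Fin m}
    (hx : x ∈ leadingZerosEq m j) (n : ℕ) :
    diracMartingale m n x = if n ≤ j then (m : ℝ) ^ n else 0 := by
  classical
  rw [diracMartingale, Set.indicator_apply,
    if_congr (mem_cyl_zero_iff_of_mem_leadingZerosEq hx) rfl rfl]

theorem rieszSum_diracMartingale_of_mem_leadingZerosEq (α : ℝ) {j N : ℕ} (hjN : j < N)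
    {x : ℕ → Fin m} (hx : x ∈ leadingZerosEq m j) :
    rieszSum m α (diracMartingale m) N x =
      (1 - 1 / m) * ∑ n ∈ Finset.Icc 1 j, ((m : ℝ) ^ (1 - α)) ^ n
        - ((m : ℝ) ^ (1 - α)) ^ (j + 1) / m := by
  have hm : (0 : ℝ) < m := by simp [Nat.pos_of_neZero]
  have hF := diracMartingale_apply_of_mem_leadingZerosEq hx
  rw [rieszSum_eq_of_le α _ x (K := j + 1) (fun n hn => by rw [hF, hF, if_neg, if_neg] <;> omega)
    hjN, rieszSum_succ, rieszSum, Finset.mul_sum, sub_eq_add_neg]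
  congr 1
  · refine Finset.sum_congr rfl fun n hn => ?_
    obtain ⟨hn1, hnj⟩ := Finset.mem_Icc.1 hn
    obtain ⟨k, rfl⟩ := Nat.exists_eq_add_of_le' hn1
    rw [hF, hF, if_pos hnj, if_pos (by omega), smul_eq_mul, ← Real.rpow_neg_mul_mul_pow hm,
      Nat.add_sub_cancel, pow_succ]
    field_simp
  · rw [hF, hF, if_neg (by omega), if_pos le_rfl, zero_add, smul_neg, smul_eq_mul,
      ← Real.rpow_neg_mul_mul_pow hm, pow_succ]
    field_simp

/-- On `B_j` the integrand is at least `(c s^{j+1})^p`, and `s^{(j+1)p} = m^{j+1}` cancels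
`P(B_j) ≥ m^{-(j+1)}`. -/
theorem ofReal_rpow_le_setLIntegral_rieszSum_diracMartingale (hm : 1 < m)
    {P : Measure (ℕ → Fin m)}
    (hPcyl : ∀ (n : ℕ) (w : Fin n → Fin m), P (cyl m n w) = (m : ℝ≥0∞)⁻¹ ^ n)
    {α p : ℝ} (hp : 0 ≤ p) (hαp : (1 - α) * p = 1) {c : ℝ} (hc : 0 ≤ c) {j N : ℕ} (hjN : j < N)
    (hcj : c * ((m : ℝ) ^ (1 - α)) ^ (j + 1) ≤ (1 - 1 / m) *
      ∑ n ∈ Finset.Icc 1 j, ((m : ℝ) ^ (1 - α)) ^ n - ((m : ℝ) ^ (1 - α)) ^ (j + 1) / m) :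
    ENNReal.ofReal c ^ p ≤
      ∫⁻ x in leadingZerosEq m j, ‖rieszSum m α (diracMartingale m) N x‖ₑ ^ p ∂P := by
  set s := (m : ℝ) ^ (1 - α)
  have hsp : s ^ p = m := by rw [← Real.rpow_mul (by positivity), hαp, Real.rpow_one]
  have hpt : ∀ x ∈ leadingZerosEq m j,
      ENNReal.ofReal (c * s ^ (j + 1)) ^ p ≤ ‖rieszSum m α (diracMartingale m) N x‖ₑ ^ p :=
    fun x hx => by
      rw [Real.enorm_eq_ofReal_abs, rieszSum_diracMartingale_of_mem_leadingZerosEq _ hjN hx]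
      gcongr
      exact hcj.trans (le_abs_self _)
  calc ENNReal.ofReal c ^ p
      = ENNReal.ofReal (c * s ^ (j + 1)) ^ p * (m : ℝ≥0∞)⁻¹ ^ (j + 1) := by
        rw [ENNReal.ofReal_mul_pow_rpow hc (by positivity) hp, hsp, ENNReal.ofReal_natCast,
          mul_assoc, ← mul_pow, ENNReal.mul_inv_cancel (NeZero.ne _) (by simp), one_pow, mul_one]
    _ ≤ ENNReal.ofReal (c * s ^ (j + 1)) ^ p * P (leadingZerosEq m j) := by
        gcongr
        exact inv_pow_le_measure_leadingZerosEq hm hPcyl j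
    _ = ∫⁻ _ in leadingZerosEq m j, ENNReal.ofReal (c * s ^ (j + 1)) ^ p ∂P :=
        (setLIntegral_const _ _).symm
    _ ≤ _ := setLIntegral_mono' (measurableSet_leadingZerosEq j) hpt

theorem tendsto_lintegral_rieszSum_diracMartingale (hm : 1 < m) {P : Measure (ℕ → Fin m)}
    (hPcyl : ∀ (n : ℕ) (w : Fin n → Fin m), P (cyl m n w) = (m : ℝ≥0∞)⁻¹ ^ n)
    {p : ℝ} (hp : 1 < p) :
    Tendsto (fun N => ∫⁻ x, ‖rieszSum m ((p - 1) / p) (diracMartingale m) N x‖ₑ ^ p ∂P)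
      atTop (𝓝 ∞) := by
  have hm' : (1 : ℝ) < m := by exact_mod_cast hm
  have hp0 : 0 < p := by linarith
  have hexp : 1 - (p - 1) / p = 1 / p := by field_simp; ring
  have hs1 : 1 < (m : ℝ) ^ (1 - (p - 1) / p) := Real.one_lt_rpow hm' (by rw [hexp]; positivity)
  have hsm : (m : ℝ) ^ (1 - (p - 1) / p) < m := by
    simpa using Real.rpow_lt_rpow_of_exponent_lt hm' (sub_lt_self 1 (by positivity))
  obtain ⟨c, hc, hJ⟩ := exists_pos_eventually_mul_pow_le hs1 hsm
  obtain ⟨J, hJ⟩ := eventually_atTop.1 hJ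
  have hc' : ENNReal.ofReal c ^ p ≠ 0 := by positivity
  refine tendsto_nhds_top_mono (by
    simpa [ENNReal.top_mul hc'] using ENNReal.Tendsto.mul_const (b := ENNReal.ofReal c ^ p)
      (ENNReal.tendsto_nat_nhds_top.comp (tendsto_sub_atTop_nat J)) (Or.inl top_ne_zero))
    (Eventually.of_forall fun N => ?_)
  calc _ = ∑ j ∈ Finset.Ico J N, ENNReal.ofReal c ^ p := by simp
    _ ≤ _ := Finset.sum_le_sum fun j hj =>
        ofReal_rpow_le_setLIntegral_rieszSum_diracMartingale hm hPcyl hp0.le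
          (by rw [hexp, one_div_mul_cancel hp0.ne']) hc.le (Finset.mem_Ico.1 hj).2
          (hJ j (Finset.mem_Ico.1 hj).1)
    _ ≤ _ := sum_setLIntegral_le_lintegral pairwise_disjoint_leadingZerosEq
        measurableSet_leadingZerosEq _ _

end MartingaleModel

theorem riesz_potential_not_L1_to_Lp_general (m : ℕ) (hm : 3 ≤ m)
    (P : Measure (ℕ → Fin m))
    (hPcyl : ∀ (n : ℕ) (w : Fin n → Fin m), P (cyl m n w) = ((m : ℝ≥0∞))⁻¹ ^ n)
    (p : ℝ) (hp : 1 < p) :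
    ∃ F : ℕ → (ℕ → Fin m) → ℝ, IsMartingaleFun m F ∧
      (∀ n, eLpNorm (F n) 1 P ≤ 2) ∧
      (⨆ (N : ℕ) (_ : 1 ≤ N),
        eLpNorm (rieszSum m ((p - 1) / p) F N) (ENNReal.ofReal p) P) = ⊤ := by
  have : NeZero m := ⟨by omega⟩
  refine ⟨diracMartingale m, isMartingaleFun_diracMartingale,
    fun n => (eLpNorm_one_diracMartingale hPcyl n).trans_le one_le_two, ?_⟩
  have hp0 : 0 < p := by linarith
  have hLp : Tendsto (fun N => eLpNorm (rieszSum m ((p - 1) / p) (diracMartingale m) N)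
      (ENNReal.ofReal p) P) atTop (𝓝 ∞) := by
    simp_rw [eLpNorm_eq_lintegral_rpow_enorm_toReal (by simpa using hp0) ofReal_ne_top,
      toReal_ofReal hp0.le]
    have h := ((ENNReal.continuous_rpow_const (y := 1 / p)).tendsto ⊤).comp
      (tendsto_lintegral_rieszSum_diracMartingale (by omega) hPcyl hp)
    rwa [ENNReal.top_rpow_of_pos (by positivity)] at h
  refine eq_top_of_forall_nnreal_le fun r => ?_
  obtain ⟨N, hrN, hN⟩ :=
    ((ENNReal.tendsto_nhds_top_iff_nnreal.1 hLp r).and (eventually_ge_atTop 1)).exists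
  exact le_iSup₂_of_le N hN hrN.le

/-- **Failure of the limiting Hardy–Littlewood–Sobolev inequality.** For every
`p ∈ (1,∞)` the Riesz potential `I_{(p-1)/p}` does not map `L_1` to `L_p`: there is a
real-valued martingale `F` adapted to the `m`-adic filtration with `sup_n E|F_n| ≤ 2`
such that `sup_{N ≥ 1} ‖∑_{n=1}^N m^{-((p-1)/p)n} f_n‖_{L_p(P)} = ∞`. -/
theorem riesz_potential_not_L1_to_Lp (m : ℕ) (hm : 3 ≤ m)
    (P : Measure (ℕ → Fin m)) (hP : IsProbabilityMeasure P)
    (hPcyl : ∀ (n : ℕ) (w : Fin n → Fin m), P (cyl m n w) = ((m : ℝ≥0∞))⁻¹ ^ n)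
    (p : ℝ) (hp : 1 < p) :
    ∃ F : ℕ → (ℕ → Fin m) → ℝ, IsMartingaleFun m F ∧
      (∀ n, eLpNorm (F n) 1 P ≤ 2) ∧
      (⨆ (N : ℕ) (_ : 1 ≤ N),
        eLpNorm (rieszSum m ((p - 1) / p) F N) (ENNReal.ofReal p) P) = ⊤ :=
  riesz_potential_not_L1_to_Lp_general m hm P hPcyl p hp
end
end

section
/- Besov embedding: suppose W satisfies the second structural condition and let p ∈ (1,∞). Then there is a constant C = C(m,ℓ,W,p) such that every F ∈ 𝔚 satisfies Σ_{n=1}^∞ m^{−((p−1)/p)·n}·‖f_n‖_{L_p(P)} ≤ C·‖F‖_{L_1} (i.e., I_{(p−1)/p} maps 𝔚 into the martingale Besov space B_p^{0,1}, equivalently 𝔚 embeds into B_p^{−(p−1)/p,1}); here ‖f_n‖_{L_p(P)} is the L_p norm of x ↦ ‖f_n(x)‖ (Euclidean norm on ℝ^ℓ). -/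
open MeasureTheory ENNReal NNReal

noncomputable section

open MartingaleModel

namespace MartingaleModel

/-- The Lorentz `L_{p,1}` quasinorm `‖g‖_{L_{p,1}} = ∫₀^∞ μ({x : ‖g(x)‖ > t})^{1/p} dt`. -/
def lorentzNorm {X : Type*} [MeasurableSpace X] (μ : Measure X) (p : ℝ)
    {E : Type*} [NormedAddCommGroup E] (g : X → E) : ℝ≥0∞ :=
  ∫⁻ t in Set.Ioi (0 : ℝ), (μ {x | t < ‖g x‖}) ^ (1 / p)

/-- The tuple in `V^ℓ` of values of the martingale difference `f_{n+1}` on the `m`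
children of the atom of `ℱ_n` containing `x`. -/
def diffTuple (m : ℕ) {E : Type*} [AddCommGroup E]
    (F : ℕ → (ℕ → Fin m) → E) (n : ℕ) (x : ℕ → Fin m) : Fin m → E :=
  fun j => F (n + 1) (Function.update x n j) - F n x

/-- Membership of a martingale in the Sobolev-type space `𝔚`:
every difference tuple lies in `W`. -/
def MemW (m l : ℕ) (W : Submodule ℝ (Fin m → EuclideanSpace ℝ (Fin l)))
    (F : ℕ → (ℕ → Fin m) → EuclideanSpace ℝ (Fin l)) : Prop :=
  ∀ (n : ℕ) (x : ℕ → Fin m), diffTuple m F n x ∈ W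

/-- The second structural condition: `W` contains no nonzero vector `v ⊗ a` in which
`v` has `m - 1` equal coordinates. -/
def SecondStructural (m l : ℕ) (W : Submodule ℝ (Fin m → EuclideanSpace ℝ (Fin l))) : Prop :=
  ∀ (v : Fin m → ℝ) (a : EuclideanSpace ℝ (Fin l)),
    (∑ j, v j = 0) → (∃ j₀ c, ∀ j, j ≠ j₀ → v j = c) →
    (fun j => v j • a) ∈ W → (fun j => v j • a) = 0

end MartingaleModel

/-!
Write `φₙ = m^{-(p-1)n/p} ‖Fₙ‖_p` and `aₙ = ‖Fₙ‖₁`. By compactness of the unit sphere of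
`ℝ^ℓ × W`, the second structural condition gives `θ < 1` with
`∑ⱼ ‖A + bⱼ‖^p ≤ θ (∑ⱼ ‖A + bⱼ‖)^p` for all `A` and `b ∈ W`: equality in `∑ cⱼ^p ≤ (∑ cⱼ)^p`
forces all but one `A + bⱼ` to vanish, and then `b` is `v ⊗ A` for a `v` with `m - 1` equal
coordinates. On an atom of `ℱₙ` the martingale property gives `m ‖Fₙ‖ ≤ ∑ⱼ ‖Fₙ₊₁(· j)‖`, so
with Minkowski's inequality over the atoms this yields `φₙ₊₁ ≤ θ^{1/p} φₙ + (aₙ₊₁ - aₙ)`.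
Summing, `(1 - θ^{1/p}) ∑_{n ≤ N} φₙ ≤ a_N ≤ ‖F‖_{L₁}`, and the triangle inequality bounds the
`n`-th Besov term of the differences by `φₙ + φₙ₋₁`.
-/

lemma Real.rpow_le_rpow_sub_one_mul {x T p : ℝ} (hx : 0 ≤ x) (hxT : x ≤ T) (hp : 1 ≤ p) :
    x ^ p ≤ T ^ (p - 1) * x := by
  calc x ^ p = x ^ (p - 1) * x := by rw [← Real.rpow_add_one' hx (by linarith), sub_add_cancel]
    _ ≤ T ^ (p - 1) * x := by gcongr

lemma Real.sum_rpow_le_rpow_sum {ι : Type*} [Fintype ι] {c : ι → ℝ} (hc : ∀ i, 0 ≤ c i)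
    {p : ℝ} (hp : 1 ≤ p) : ∑ i, c i ^ p ≤ (∑ i, c i) ^ p := by
  have hT : 0 ≤ ∑ i, c i := Finset.sum_nonneg fun i _ => hc i
  calc ∑ i, c i ^ p ≤ ∑ i, (∑ i, c i) ^ (p - 1) * c i := Finset.sum_le_sum fun i _ =>
        Real.rpow_le_rpow_sub_one_mul (hc i) (Finset.single_le_sum (fun i _ => hc i) (by simp)) hp
    _ = (∑ i, c i) ^ p := by
      rw [← Finset.mul_sum, ← Real.rpow_add_one' hT (by linarith), sub_add_cancel]

lemma Real.sum_rpow_lt_rpow_sum {ι : Type*} [Fintype ι] {c : ι → ℝ} (hc : ∀ i, 0 ≤ c i)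
    {i j : ι} (hij : i ≠ j) (hi : 0 < c i) (hj : 0 < c j) {p : ℝ} (hp : 1 < p) :
    ∑ k, c k ^ p < (∑ k, c k) ^ p := by
  classical
  set T := ∑ k, c k
  have hle : ∀ k, c k ≤ T := fun k => Finset.single_le_sum (fun k _ => hc k) (by simp)
  have hiT : c i < T := calc
    c i < c i + c j := by linarith
    _ = ∑ k ∈ {i, j}, c k := (Finset.sum_pair hij).symm
    _ ≤ T := Finset.sum_le_sum_of_subset_of_nonneg (by simp) fun k _ _ => hc k
  calc ∑ k, c k ^ p < ∑ k, T ^ (p - 1) * c k := by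
        refine Finset.sum_lt_sum (fun k _ => Real.rpow_le_rpow_sub_one_mul (hc k) (hle k) hp.le)
          ⟨i, by simp, ?_⟩
        calc c i ^ p = c i ^ (p - 1) * c i := by
              rw [← Real.rpow_add_one hi.ne', sub_add_cancel]
          _ < T ^ (p - 1) * c i := by gcongr
    _ = T ^ p := by rw [← Finset.mul_sum, ← Real.rpow_add_one' (by linarith) (by linarith),
        sub_add_cancel]

lemma Real.rpow_sum_rpow_le_sum {ι : Type*} [Fintype ι] {c : ι → ℝ} (hc : ∀ i, 0 ≤ c i)
    {p : ℝ} (hp : 1 ≤ p) : (∑ i, c i ^ p) ^ (1 / p) ≤ ∑ i, c i := by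
  have hT : 0 ≤ ∑ i, c i := Finset.sum_nonneg fun i _ => hc i
  calc (∑ i, c i ^ p) ^ (1 / p) ≤ ((∑ i, c i) ^ p) ^ (1 / p) := by
        gcongr
        · exact Finset.sum_nonneg fun i _ => by have := hc i; positivity
        · exact Real.sum_rpow_le_rpow_sum hc hp
    _ = ∑ i, c i := by rw [one_div, Real.rpow_rpow_inv hT (by linarith)]

lemma Real.Lp_sum_le_of_sum_rpow_le_mul {ι κ : Type*} [Fintype ι] [Fintype κ] {u : ι → ℝ}
    {v : ι → κ → ℝ} {c θ p : ℝ} (hu : ∀ i, 0 ≤ u i) (hv : ∀ i k, 0 ≤ v i k) (hc : 0 ≤ c)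
    (hθ0 : 0 ≤ θ) (hθ1 : θ ≤ 1) (hp : 1 ≤ p) (huv : ∀ i, c * u i ≤ ∑ k, v i k)
    (hθ : ∀ i, ∑ k, v i k ^ p ≤ θ * (∑ k, v i k) ^ p) :
    (∑ i, ∑ k, v i k ^ p) ^ (1 / p) ≤
      θ ^ (1 / p) * (c * (∑ i, u i ^ p) ^ (1 / p)) + (∑ i, ∑ k, v i k - c * ∑ i, u i) := by
  set Γ := fun i => ∑ k, v i k
  have hp0 : 0 ≤ 1 / p := by positivity
  have hΓ : ∀ i, 0 ≤ Γ i - c * u i := fun i => sub_nonneg.2 (huv i)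
  have hminkowski := Real.Lp_add_le_of_nonneg Finset.univ hp (f := fun i => c * u i)
    (g := fun i => Γ i - c * u i) (fun i _ => by have := hu i; positivity) (fun i _ => hΓ i)
  simp only [add_sub_cancel] at hminkowski
  have hθp : θ ^ (1 / p) ≤ 1 := Real.rpow_le_one hθ0 hθ1 hp0
  have hcu : (∑ i, (c * u i) ^ p) ^ (1 / p) = c * (∑ i, u i ^ p) ^ (1 / p) := by
    simp_rw [Real.mul_rpow hc (hu _), ← Finset.mul_sum]
    rw [Real.mul_rpow (by positivity) (Finset.sum_nonneg fun i _ => by have := hu i; positivity),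
      ← Real.rpow_mul hc, mul_one_div_cancel (by linarith), Real.rpow_one]
  calc (∑ i, ∑ k, v i k ^ p) ^ (1 / p) ≤ (∑ i, θ * Γ i ^ p) ^ (1 / p) := by
        gcongr
        · exact Finset.sum_nonneg fun i _ => Finset.sum_nonneg fun k _ => by
            have := hv i k; positivity
        · exact hθ _
    _ = θ ^ (1 / p) * (∑ i, Γ i ^ p) ^ (1 / p) := by
        rw [← Finset.mul_sum, Real.mul_rpow hθ0 (Finset.sum_nonneg fun i _ => by
          have : 0 ≤ Γ i := Finset.sum_nonneg fun k _ => hv i k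
          positivity)]
    _ ≤ θ ^ (1 / p) * (c * (∑ i, u i ^ p) ^ (1 / p) + ∑ i, (Γ i - c * u i)) := by
        rw [← hcu]
        gcongr
        exact hminkowski.trans (by gcongr; exact Real.rpow_sum_rpow_le_sum hΓ hp)
    _ ≤ θ ^ (1 / p) * (c * (∑ i, u i ^ p) ^ (1 / p)) + ∑ i, (Γ i - c * u i) := by
        rw [mul_add]
        gcongr
        exact mul_le_of_le_one_left (Finset.sum_nonneg fun i _ => hΓ i) hθp
    _ = _ := by rw [Finset.sum_sub_distrib, Finset.mul_sum]

lemma Real.rpow_neg_mul_inv_pow_mul_rpow {b p X : ℝ} (hb : 0 < b) (hp : 0 < p) (n : ℕ)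
    (hX : 0 ≤ X) : b ^ (-((p - 1) / p * n)) * (b⁻¹ ^ n * X) ^ (1 / p) = b⁻¹ ^ n * X ^ (1 / p) := by
  rw [Real.mul_rpow (by positivity) hX, ← mul_assoc]
  congr 1
  rw [inv_pow, ← Real.rpow_natCast, ← Real.rpow_neg hb.le, ← Real.rpow_mul hb.le,
    ← Real.rpow_add hb]
  congr 1
  field_simp
  ring

lemma sum_range_le_of_le_mul_add_sub {φ a : ℕ → ℝ} {σ : ℝ} (hσ : 0 ≤ σ) (hφ : ∀ n, 0 ≤ φ n)
    (h : ∀ n, φ (n + 1) ≤ σ * φ n + (a (n + 1) - a n)) (N : ℕ) :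
    (1 - σ) * ∑ n ∈ Finset.range (N + 1), φ n ≤ φ 0 - a 0 + a N := by
  have hstep : ∑ n ∈ Finset.range N, φ (n + 1) ≤ σ * ∑ n ∈ Finset.range N, φ n + (a N - a 0) :=
    calc ∑ n ∈ Finset.range N, φ (n + 1)
        ≤ ∑ n ∈ Finset.range N, (σ * φ n + (a (n + 1) - a n)) := Finset.sum_le_sum fun n _ => h n
      _ = _ := by rw [Finset.sum_add_distrib, ← Finset.mul_sum, Finset.sum_range_sub]
  have hmono : σ * ∑ n ∈ Finset.range N, φ n ≤ σ * ∑ n ∈ Finset.range (N + 1), φ n := by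
    rw [Finset.sum_range_succ]
    linarith [mul_nonneg hσ (hφ N)]
  rw [Finset.sum_range_succ'] at hmono ⊢
  linarith

lemma antitone_ofReal_rpow_neg_mul {b s : ℝ} (hb : 1 ≤ b) (hs : 0 ≤ s) :
    Antitone fun n : ℕ => ENNReal.ofReal (b ^ (-(s * n))) := fun i j hij =>
  ENNReal.ofReal_le_ofReal <| Real.rpow_le_rpow_of_exponent_le hb <| by gcongr

lemma ENNReal.tsum_mul_eLpNorm_sub_le {α E : Type*} [MeasurableSpace α] [NormedAddCommGroup E]
    {μ : Measure α} {f : ℕ → α → E} (hf : ∀ n, AEStronglyMeasurable (f n) μ) {q : ℝ≥0∞}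
    (hq : 1 ≤ q) {c : ℕ → ℝ≥0∞} (hc : Antitone c) :
    ∑' n, c (n + 1) * eLpNorm (f (n + 1) - f n) q μ ≤ 2 * ∑' n, c n * eLpNorm (f n) q μ :=
  calc ∑' n, c (n + 1) * eLpNorm (f (n + 1) - f n) q μ
      ≤ ∑' n, (c (n + 1) * eLpNorm (f (n + 1)) q μ + c n * eLpNorm (f n) q μ) :=
        ENNReal.tsum_le_tsum fun n => calc
          c (n + 1) * eLpNorm (f (n + 1) - f n) q μ
              ≤ c (n + 1) * (eLpNorm (f (n + 1)) q μ + eLpNorm (f n) q μ) := by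
                gcongr; exact eLpNorm_sub_le (hf _) (hf _) hq
            _ ≤ _ := by rw [mul_add]; gcongr; exact hc n.le_succ
    _ = ∑' n, c (n + 1) * eLpNorm (f (n + 1)) q μ + ∑' n, c n * eLpNorm (f n) q μ :=
        ENNReal.tsum_add
    _ ≤ 2 * ∑' n, c n * eLpNorm (f n) q μ := by
        rw [two_mul]
        gcongr ?_ + _
        exact ENNReal.tsum_comp_le_tsum_of_injective (add_left_injective 1)
          fun n => c n * eLpNorm (f n) q μ

lemma exists_lt_one_forall_le_mul_of_homogeneous {E : Type*} [NormedAddCommGroup E]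
    [NormedSpace ℝ E] [FiniteDimensional ℝ E] (S : Submodule ℝ E) {f g : E → ℝ} {p : ℝ}
    (hf : Continuous f) (hg : Continuous g)
    (hfp : ∀ c : ℝ, 0 < c → ∀ x, f (c • x) = c ^ p * f x)
    (hgp : ∀ c : ℝ, 0 < c → ∀ x, g (c • x) = c ^ p * g x)
    (hf0 : ∀ x, 0 ≤ f x) (hfg : ∀ x ∈ S, x ≠ 0 → f x < g x) :
    ∃ θ, 0 ≤ θ ∧ θ < 1 ∧ ∀ x ∈ S, x ≠ 0 → f x ≤ θ * g x := by
  set K := Metric.sphere (0 : E) 1 ∩ S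
  have hK : ∀ x ∈ S, x ≠ 0 → ‖x‖⁻¹ • x ∈ K := fun x hx hx0 =>
    ⟨by simp [norm_smul, hx0], S.smul_mem _ hx⟩
  have hK0 : ∀ x ∈ K, x ≠ 0 := fun x hx h => by simp [K, h] at hx
  have hgpos : ∀ x ∈ S, x ≠ 0 → 0 < g x := fun x hx hx0 => (hf0 x).trans_lt (hfg x hx hx0)
  rcases K.eq_empty_or_nonempty with hKe | hKne
  · refine ⟨0, le_rfl, one_pos, fun x hx hx0 => ?_⟩
    simpa [hKe] using hK x hx hx0
  have hKc : IsCompact K :=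
    (isCompact_sphere 0 1).inter_right S.closed_of_finiteDimensional
  obtain ⟨x₀, hx₀, hmax⟩ := hKc.exists_isMaxOn hKne <|
    hf.continuousOn.div hg.continuousOn fun x hx => (hgpos x hx.2 (hK0 x hx)).ne'
  have hg₀ := hgpos x₀ hx₀.2 (hK0 x₀ hx₀)
  refine ⟨f x₀ / g x₀, div_nonneg (hf0 x₀) hg₀.le,
    (div_lt_one hg₀).2 (hfg x₀ hx₀.2 (hK0 x₀ hx₀)), fun x hx hx0 => ?_⟩
  have hr : 0 < ‖x‖⁻¹ := by positivity
  have h : f (‖x‖⁻¹ • x) / g (‖x‖⁻¹ • x) ≤ f x₀ / g x₀ := hmax (hK x hx hx0)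
  rw [hfp _ hr, hgp _ hr, mul_div_mul_left _ _ (by positivity)] at h
  exact (div_le_iff₀ (hgpos x hx hx0)).1 h

namespace MartingaleModel

section Structural

variable {m l : ℕ} {W : Submodule ℝ (Fin m → EuclideanSpace ℝ (Fin l))}

lemma SecondStructural.eq_zero_of_forall_ne_add_eq_zero (hW : SecondStructural m l W)
    (hWV : ∀ b ∈ W, ∑ j : Fin m, b j = 0) (hm : 1 < m) {A : EuclideanSpace ℝ (Fin l)}
    {b : Fin m → EuclideanSpace ℝ (Fin l)} (hb : b ∈ W) {j₀ : Fin m}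
    (h : ∀ j ≠ j₀, A + b j = 0) : A = 0 ∧ b = 0 := by
  set v : Fin m → ℝ := Pi.single j₀ (m : ℝ) - 1
  have hj₀ : A + b j₀ = (m : ℝ) • A := calc
    A + b j₀ = ∑ j, (A + b j) := (Finset.sum_eq_single j₀ (fun j _ hj => h j hj) (by simp)).symm
    _ = (m : ℝ) • A := by simp [Finset.sum_add_distrib, hWV b hb, Nat.cast_smul_eq_nsmul]
  have hbv : b = fun j => v j • A := by
    funext j
    by_cases hj : j = j₀
    · subst hj
      simp only [v, Pi.sub_apply, Pi.single_eq_same, Pi.one_apply, sub_smul, one_smul]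
      rw [← hj₀]; abel
    · simp [v, hj, eq_neg_of_add_eq_zero_right (h j hj)]
  have hv : (fun j => v j • A) = 0 := hW v A (by simp [v, Finset.sum_sub_distrib])
    ⟨j₀, -1, fun j hj => by simp [v, hj]⟩ (hbv ▸ hb)
  have := Fin.nontrivial_iff_two_le.2 hm
  obtain ⟨j₁, hj₁⟩ := exists_ne j₀
  have hb0 : b = 0 := hbv.trans hv
  refine ⟨?_, hb0⟩
  simpa [hb0] using h j₁ hj₁

lemma SecondStructural.exists_ne_add_ne_zero (hW : SecondStructural m l W)
    (hWV : ∀ b ∈ W, ∑ j : Fin m, b j = 0) (hm : 1 < m) {A : EuclideanSpace ℝ (Fin l)}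
    {b : Fin m → EuclideanSpace ℝ (Fin l)} (hb : b ∈ W) (hAb : (A, b) ≠ 0) :
    ∃ i j, i ≠ j ∧ A + b i ≠ 0 ∧ A + b j ≠ 0 := by
  by_contra! h
  obtain ⟨j₀, hj₀⟩ : ∃ j₀, ∀ j ≠ j₀, A + b j = 0 := by
    by_cases hex : ∀ i, A + b i = 0
    · exact ⟨⟨0, by omega⟩, fun j _ => hex j⟩
    · obtain ⟨i, hi⟩ := not_forall.1 hex
      exact ⟨i, fun j hj => h i j hj.symm hi⟩
  obtain ⟨hA, hb0⟩ := hW.eq_zero_of_forall_ne_add_eq_zero hWV hm hb hj₀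
  exact hAb (by simp [hA, hb0])

lemma SecondStructural.exists_sum_norm_rpow_le (hW : SecondStructural m l W)
    (hWV : ∀ b ∈ W, ∑ j : Fin m, b j = 0) (hm : 1 < m) {p : ℝ} (hp : 1 < p) :
    ∃ θ, 0 ≤ θ ∧ θ < 1 ∧ ∀ (A : EuclideanSpace ℝ (Fin l)), ∀ b ∈ W,
      ∑ j, ‖A + b j‖ ^ p ≤ θ * (∑ j, ‖A + b j‖) ^ p := by
  have hnorm : ∀ c : ℝ, 0 < c → ∀ (z : EuclideanSpace ℝ (Fin l) × (Fin m → _)) j,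
      ‖(c • z).1 + (c • z).2 j‖ = c * ‖z.1 + z.2 j‖ := fun c hc z j => by
    simp only [Prod.smul_fst, Prod.smul_snd, Pi.smul_apply, ← smul_add, norm_smul,
      Real.norm_of_nonneg hc.le]
  have hp0 : 0 ≤ p := by linarith
  have hsum0 : ∀ z : EuclideanSpace ℝ (Fin l) × (Fin m → _), 0 ≤ ∑ j, ‖z.1 + z.2 j‖ :=
    fun z => Finset.sum_nonneg fun _ _ => norm_nonneg _
  obtain ⟨θ, hθ0, hθ1, hθ⟩ := exists_lt_one_forall_le_mul_of_homogeneous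
    ((⊤ : Submodule ℝ (EuclideanSpace ℝ (Fin l))).prod W)
    (f := fun z => ∑ j, ‖z.1 + z.2 j‖ ^ p) (g := fun z => (∑ j, ‖z.1 + z.2 j‖) ^ p) (p := p)
    (continuous_finsetSum _ fun j _ => (by fun_prop : Continuous fun z :
      EuclideanSpace ℝ (Fin l) × (Fin m → _) => ‖z.1 + z.2 j‖).rpow_const fun _ => .inr hp0)
    ((continuous_finsetSum _ fun j _ => by fun_prop).rpow_const fun _ => .inr hp0)
    (fun c hc z => by simp only [hnorm c hc, Real.mul_rpow hc.le (norm_nonneg _), Finset.mul_sum])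
    (fun c hc z => by simp only [hnorm c hc, ← Finset.mul_sum, Real.mul_rpow hc.le (hsum0 z)])
    (fun z => Finset.sum_nonneg fun j _ => by positivity)
    (fun z hz hz0 => by
      obtain ⟨i, j, hij, hi, hj⟩ := hW.exists_ne_add_ne_zero hWV hm (Submodule.mem_prod.1 hz).2 hz0
      exact Real.sum_rpow_lt_rpow_sum (c := fun k => ‖z.1 + z.2 k‖) (fun _ => norm_nonneg _) hij
        (norm_pos_iff.2 hi) (norm_pos_iff.2 hj) hp)
  refine ⟨θ, hθ0, hθ1, fun A b hb => ?_⟩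
  by_cases hAb : (A, b) = 0
  · simp_all [Real.zero_rpow (by linarith : p ≠ 0)]
  · exact hθ (A, b) (Submodule.mem_prod.2 ⟨trivial, hb⟩) hAb

end Structural

variable {m : ℕ}

lemma AdaptedFun.dependsOn {E : Type*} {F : ℕ → (ℕ → Fin m) → E} (hF : AdaptedFun m F) (n : ℕ) :
    DependsOn (F n) (Set.Iio n) :=
  fun x y h => hF n x y h

lemma preimage_restrict_singleton {n : ℕ} (w : Fin n → Fin m) :
    (fun x : ℕ → Fin m => fun i : Fin n => x i) ⁻¹' {w} = cyl m n w := by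
  ext x; simp [cyl, funext_iff]

lemma measurable_restrict_fin (n : ℕ) : Measurable fun x : ℕ → Fin m => fun i : Fin n => x i :=
  measurable_pi_lambda _ fun _ => measurable_pi_apply _

lemma IsMartingaleFun.mul_norm_le_sum_norm {E : Type*} [NormedAddCommGroup E] [NormedSpace ℝ E]
    {F : ℕ → (ℕ → Fin m) → E} (hF : IsMartingaleFun m F) (n : ℕ) (x : ℕ → Fin m) :
    (m : ℝ) * ‖F n x‖ ≤ ∑ j : Fin m, ‖F (n + 1) (Function.update x n j)‖ := by
  calc (m : ℝ) * ‖F n x‖ = ‖(m : ℝ) • F n x‖ := by rw [norm_smul, Real.norm_natCast]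
    _ ≤ _ := by rw [hF.2 n x]; exact norm_sum_le _ _

variable [NeZero m]

def cylPoint {n : ℕ} (w : Fin n → Fin m) : ℕ → Fin m :=
  fun i => if h : i < n then w ⟨i, h⟩ else 0

lemma cylPoint_snoc {n : ℕ} (w : Fin n → Fin m) (j : Fin m) :
    cylPoint (Fin.snoc w j : Fin (n + 1) → Fin m) = Function.update (cylPoint w) n j := by
  funext i
  rcases lt_trichotomy i n with hi | rfl | hi
  · simp [cylPoint, Fin.snoc, hi, Nat.lt_succ_of_lt hi, Function.update_of_ne hi.ne]
  · simp [cylPoint, Fin.snoc]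
  · simp [cylPoint, hi.ne', hi.not_gt, Nat.not_lt.2 hi]

lemma sum_cylPoint_succ {M : Type*} [AddCommMonoid M] {n : ℕ} (G : (ℕ → Fin m) → M) :
    ∑ u : Fin (n + 1) → Fin m, G (cylPoint u) =
      ∑ w : Fin n → Fin m, ∑ j : Fin m, G (Function.update (cylPoint w) n j) := by
  rw [← (Fin.snocEquiv fun _ => Fin m).sum_comp, Fintype.sum_prod_type_right]
  simp [Fin.snocEquiv, cylPoint_snoc]

lemma _root_.DependsOn.apply_cylPoint {E : Type*} {g : (ℕ → Fin m) → E} {n : ℕ}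
    (hg : DependsOn g (Set.Iio n)) (x : ℕ → Fin m) :
    g (cylPoint fun i : Fin n => x i) = g x :=
  hg fun i hi => by simp [cylPoint, Set.mem_Iio.1 hi]

lemma lintegral_eq_sum_cylPoint {P : Measure (ℕ → Fin m)}
    (hP : ∀ (n : ℕ) (w : Fin n → Fin m), P (cyl m n w) = ((m : ℝ≥0∞))⁻¹ ^ n)
    {n : ℕ} {g : (ℕ → Fin m) → ℝ≥0∞} (hg : DependsOn g (Set.Iio n)) :
    ∫⁻ x, g x ∂P = ∑ w : Fin n → Fin m, ((m : ℝ≥0∞))⁻¹ ^ n * g (cylPoint w) := by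
  have hπ := measurable_restrict_fin (m := m) n
  calc ∫⁻ x, g x ∂P = ∫⁻ x, g (cylPoint fun i : Fin n => x i) ∂P := by simp [hg.apply_cylPoint]
    _ = ∫⁻ w, g (cylPoint w) ∂(P.map fun x : ℕ → Fin m => fun i : Fin n => x i) :=
      (lintegral_map (.of_discrete (f := fun w : Fin n → Fin m => g (cylPoint w))) hπ).symm
    _ = _ := by
      rw [lintegral_fintype]
      refine Finset.sum_congr rfl fun w _ => ?_
      rw [Measure.map_apply hπ (measurableSet_singleton w), preimage_restrict_singleton, hP,
        mul_comm]

lemma _root_.DependsOn.aestronglyMeasurable {E : Type*} [NormedAddCommGroup E]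
    {P : Measure (ℕ → Fin m)} {g : (ℕ → Fin m) → E} {n : ℕ} (hg : DependsOn g (Set.Iio n)) :
    AEStronglyMeasurable g P := by
  have hπ := measurable_restrict_fin (m := m) n
  have : g = (fun w : Fin n → Fin m => g (cylPoint w)) ∘ fun x i => x i :=
    funext fun x => (hg.apply_cylPoint x).symm
  rw [this]
  exact (StronglyMeasurable.of_discrete.comp_measurable hπ).aestronglyMeasurable

variable {E : Type*} [NormedAddCommGroup E]

-- For `g` depending on the first `n` coordinates this is `m^{-(p-1)n/p} ‖g‖_{L_p(P)}`
-- (`ofReal_rpow_mul_eLpNorm`); in particular `levelNorm 1 n g = ‖g‖_{L_1(P)}`.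
def levelNorm (p : ℝ) (n : ℕ) (g : (ℕ → Fin m) → E) : ℝ :=
  (m : ℝ)⁻¹ ^ n * (∑ w : Fin n → Fin m, ‖g (cylPoint w)‖ ^ p) ^ (1 / p)

lemma levelNorm_nonneg (p : ℝ) (n : ℕ) (g : (ℕ → Fin m) → E) : 0 ≤ levelNorm p n g := by
  unfold levelNorm; positivity

lemma eLpNorm_eq_sum_cylPoint {P : Measure (ℕ → Fin m)}
    (hP : ∀ (n : ℕ) (w : Fin n → Fin m), P (cyl m n w) = ((m : ℝ≥0∞))⁻¹ ^ n)
    {p : ℝ} (hp : 0 < p) {n : ℕ} {g : (ℕ → Fin m) → E} (hg : DependsOn g (Set.Iio n)) :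
    eLpNorm g (ENNReal.ofReal p) P =
      ENNReal.ofReal (((m : ℝ)⁻¹ ^ n * ∑ w : Fin n → Fin m, ‖g (cylPoint w)‖ ^ p) ^ (1 / p)) := by
  have hg' : DependsOn (fun x => ‖g x‖ₑ ^ p) (Set.Iio n) := fun x y h => by simp only [hg h]
  rw [eLpNorm_eq_lintegral_rpow_enorm_toReal (by simpa using hp) ENNReal.ofReal_ne_top,
    ENNReal.toReal_ofReal hp.le, lintegral_eq_sum_cylPoint hP hg', Finset.mul_sum,
    ← ENNReal.ofReal_rpow_of_nonneg (by positivity) (by positivity),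
    ENNReal.ofReal_sum_of_nonneg fun w _ => by positivity]
  congr 2 with w
  rw [ENNReal.ofReal_mul (by positivity), ← ofReal_norm,
    ENNReal.ofReal_rpow_of_nonneg (norm_nonneg _) hp.le, ENNReal.ofReal_pow (by positivity),
    ENNReal.ofReal_inv_of_pos (by simp [Nat.pos_of_neZero]), ENNReal.ofReal_natCast]

lemma ofReal_rpow_mul_eLpNorm {P : Measure (ℕ → Fin m)}
    (hP : ∀ (n : ℕ) (w : Fin n → Fin m), P (cyl m n w) = ((m : ℝ≥0∞))⁻¹ ^ n)
    {p : ℝ} (hp : 0 < p) {n : ℕ} {g : (ℕ → Fin m) → E} (hg : DependsOn g (Set.Iio n)) :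
    ENNReal.ofReal ((m : ℝ) ^ (-((p - 1) / p * n))) * eLpNorm g (ENNReal.ofReal p) P =
      ENNReal.ofReal (levelNorm p n g) := by
  rw [eLpNorm_eq_sum_cylPoint hP hp hg, ← ENNReal.ofReal_mul (by positivity),
    Real.rpow_neg_mul_inv_pow_mul_rpow (by simp [Nat.pos_of_neZero]) hp n
      (by positivity), levelNorm]

lemma eLpNorm_one_eq_levelNorm {P : Measure (ℕ → Fin m)}
    (hP : ∀ (n : ℕ) (w : Fin n → Fin m), P (cyl m n w) = ((m : ℝ≥0∞))⁻¹ ^ n)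
    {n : ℕ} {g : (ℕ → Fin m) → E} (hg : DependsOn g (Set.Iio n)) :
    eLpNorm g 1 P = ENNReal.ofReal (levelNorm 1 n g) := by
  simpa using ofReal_rpow_mul_eLpNorm hP one_pos hg

lemma levelNorm_le_levelNorm_one {p : ℝ} (hp : 1 ≤ p) (n : ℕ) (g : (ℕ → Fin m) → E) :
    levelNorm p n g ≤ levelNorm 1 n g := by
  simp only [levelNorm, Real.rpow_one, div_one]
  gcongr
  exact Real.rpow_sum_rpow_le_sum (fun _ => norm_nonneg _) hp

variable [NormedSpace ℝ E] {F : ℕ → (ℕ → Fin m) → E} {θ p : ℝ}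

lemma IsMartingaleFun.levelNorm_succ_le (hF : IsMartingaleFun m F) (hθ0 : 0 ≤ θ) (hθ1 : θ ≤ 1)
    (hp : 1 ≤ p) (hθ : ∀ n x, ∑ j : Fin m, ‖F (n + 1) (Function.update x n j)‖ ^ p ≤
      θ * (∑ j : Fin m, ‖F (n + 1) (Function.update x n j)‖) ^ p) (n : ℕ) :
    levelNorm p (n + 1) (F (n + 1)) ≤ θ ^ (1 / p) * levelNorm p n (F n) +
      (levelNorm 1 (n + 1) (F (n + 1)) - levelNorm 1 n (F n)) := by
  have key := Real.Lp_sum_le_of_sum_rpow_le_mul (u := fun w : Fin n → Fin m => ‖F n (cylPoint w)‖)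
    (v := fun w j => ‖F (n + 1) (Function.update (cylPoint w) n j)‖) (fun _ => norm_nonneg _)
    (fun _ _ => norm_nonneg _) (Nat.cast_nonneg m) hθ0 hθ1 hp
    (fun w => hF.mul_norm_le_sum_norm n _) (fun w => hθ n _)
  simp only [levelNorm, Real.rpow_one, div_one,
    sum_cylPoint_succ fun x => ‖F (n + 1) x‖ ^ p, sum_cylPoint_succ fun x => ‖F (n + 1) x‖]
  have hm : (m : ℝ) ≠ 0 := by simp [NeZero.ne m]
  calc _ ≤ (m : ℝ)⁻¹ ^ (n + 1) * _ := mul_le_mul_of_nonneg_left key (by positivity)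
    _ = _ := by rw [pow_succ]; field_simp

lemma IsMartingaleFun.sum_levelNorm_le (hF : IsMartingaleFun m F) (hθ0 : 0 ≤ θ) (hθ1 : θ ≤ 1)
    (hp : 1 ≤ p) (hθ : ∀ n x, ∑ j : Fin m, ‖F (n + 1) (Function.update x n j)‖ ^ p ≤
      θ * (∑ j : Fin m, ‖F (n + 1) (Function.update x n j)‖) ^ p) (N : ℕ) :
    (1 - θ ^ (1 / p)) * ∑ n ∈ Finset.range (N + 1), levelNorm p n (F n) ≤ levelNorm 1 N (F N) := by
  have := sum_range_le_of_le_mul_add_sub (a := fun n => levelNorm 1 n (F n))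
    (Real.rpow_nonneg hθ0 _) (fun n => levelNorm_nonneg p n (F n)) (hF.levelNorm_succ_le hθ0 hθ1 hp hθ) N
  linarith [levelNorm_le_levelNorm_one hp 0 (F 0)]

lemma IsMartingaleFun.tsum_levelNorm_le (hF : IsMartingaleFun m F) {P : Measure (ℕ → Fin m)}
    (hP : ∀ (n : ℕ) (w : Fin n → Fin m), P (cyl m n w) = ((m : ℝ≥0∞))⁻¹ ^ n)
    (hθ0 : 0 ≤ θ) (hθ1 : θ < 1) (hp : 1 ≤ p)
    (hθ : ∀ n x, ∑ j : Fin m, ‖F (n + 1) (Function.update x n j)‖ ^ p ≤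
      θ * (∑ j : Fin m, ‖F (n + 1) (Function.update x n j)‖) ^ p) :
    ∑' n, ENNReal.ofReal (levelNorm p n (F n)) ≤
      ENNReal.ofReal (1 - θ ^ (1 / p))⁻¹ * ⨆ n, eLpNorm (F n) 1 P := by
  have hσ : 0 < 1 - θ ^ (1 / p) := sub_pos.2 (Real.rpow_lt_one hθ0 hθ1 (by positivity))
  refine ENNReal.tsum_le_of_sum_range_le fun N => ?_
  calc ∑ n ∈ Finset.range N, ENNReal.ofReal (levelNorm p n (F n))
      ≤ ∑ n ∈ Finset.range (N + 1), ENNReal.ofReal (levelNorm p n (F n)) :=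
        Finset.sum_le_sum_of_subset (Finset.range_subset_range.2 N.le_succ)
    _ = ENNReal.ofReal (∑ n ∈ Finset.range (N + 1), levelNorm p n (F n)) :=
        (ENNReal.ofReal_sum_of_nonneg fun n _ => levelNorm_nonneg p n (F n)).symm
    _ ≤ ENNReal.ofReal ((1 - θ ^ (1 / p))⁻¹ * levelNorm 1 N (F N)) :=
        ENNReal.ofReal_le_ofReal <| (le_inv_mul_iff₀ hσ).2 (hF.sum_levelNorm_le hθ0 hθ1.le hp hθ N)
    _ = ENNReal.ofReal (1 - θ ^ (1 / p))⁻¹ * eLpNorm (F N) 1 P := by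
        rw [ENNReal.ofReal_mul (by positivity), eLpNorm_one_eq_levelNorm hP (hF.1.dependsOn N)]
    _ ≤ _ := by gcongr; exact le_iSup (fun n => eLpNorm (F n) 1 P) N

end MartingaleModel

theorem martingale_besov_embedding_general (m l : ℕ) (hm : 3 ≤ m)
    (P : Measure (ℕ → Fin m))
    (hPcyl : ∀ (n : ℕ) (w : Fin n → Fin m), P (cyl m n w) = ((m : ℝ≥0∞))⁻¹ ^ n)
    (W : Submodule ℝ (Fin m → EuclideanSpace ℝ (Fin l)))
    (hWV : ∀ b ∈ W, ∑ j : Fin m, b j = 0)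
    (hW : SecondStructural m l W) (p : ℝ) (hp : 1 < p) :
    ∃ C : ℝ≥0, ∀ F : ℕ → (ℕ → Fin m) → EuclideanSpace ℝ (Fin l),
      IsMartingaleFun m F → (⨆ n, eLpNorm (F n) 1 P) < ⊤ → MemW m l W F →
      ∑' n : ℕ, ENNReal.ofReal ((m : ℝ) ^ (-(((p - 1) / p) * (n + 1 : ℕ)))) *
          eLpNorm (fun x => F (n + 1) x - F n x) (ENNReal.ofReal p) P ≤
        C * ⨆ n, eLpNorm (F n) 1 P := by
  have : NeZero m := ⟨by omega⟩
  obtain ⟨θ, hθ0, hθ1, hθ⟩ := hW.exists_sum_norm_rpow_le hWV (by omega) hp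
  refine ⟨(2 * (1 - θ ^ (1 / p))⁻¹).toNNReal, fun F hF _ hFW => ?_⟩
  have hatom : ∀ n x, ∑ j : Fin m, ‖F (n + 1) (Function.update x n j)‖ ^ p ≤
      θ * (∑ j : Fin m, ‖F (n + 1) (Function.update x n j)‖) ^ p := fun n x => by
    simpa [diffTuple] using hθ (F n x) _ (hFW n x)
  have hp0 : 0 < p := by linarith
  calc _ ≤ 2 * ∑' n : ℕ, ENNReal.ofReal ((m : ℝ) ^ (-((p - 1) / p * n))) *
        eLpNorm (F n) (ENNReal.ofReal p) P :=
      ENNReal.tsum_mul_eLpNorm_sub_le (fun n => (hF.1.dependsOn n).aestronglyMeasurable)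
        (by simpa using hp.le)
        (antitone_ofReal_rpow_neg_mul (by exact_mod_cast NeZero.one_le)
          (div_nonneg (by linarith) hp0.le))
    _ = 2 * ∑' n, ENNReal.ofReal (levelNorm p n (F n)) := by
      simp_rw [ofReal_rpow_mul_eLpNorm hPcyl hp0 (hF.1.dependsOn _)]
    _ ≤ 2 * (ENNReal.ofReal (1 - θ ^ (1 / p))⁻¹ * ⨆ n, eLpNorm (F n) 1 P) := by
      gcongr
      exact hF.tsum_levelNorm_le hPcyl hθ0 hθ1 hp.le hatom
    _ = _ := by
      show _ = ENNReal.ofReal (2 * _) * _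
      rw [ENNReal.ofReal_mul zero_le_two, ENNReal.ofReal_ofNat, mul_assoc]

/-- **Besov embedding.** If `W ⊆ V^ℓ` satisfies the second structural condition and
`p ∈ (1,∞)`, then there is `C = C(m,ℓ,W,p)` such that every `F ∈ 𝔚` satisfies
`∑_{n=1}^∞ m^{-((p-1)/p)n} ‖f_n‖_{L_p(P)} ≤ C·‖F‖_{L_1}`; i.e. `I_{(p-1)/p}` maps `𝔚`
into the martingale Besov space `B_p^{0,1}`, equivalently `𝔚 ↪ B_p^{-(p-1)/p,1}`. -/
theorem martingale_besov_embedding (m l : ℕ) (hm : 3 ≤ m) (hl : 1 ≤ l)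
    (P : Measure (ℕ → Fin m)) (hP : IsProbabilityMeasure P)
    (hPcyl : ∀ (n : ℕ) (w : Fin n → Fin m), P (cyl m n w) = ((m : ℝ≥0∞))⁻¹ ^ n)
    (W : Submodule ℝ (Fin m → EuclideanSpace ℝ (Fin l)))
    (hWV : ∀ b ∈ W, ∑ j : Fin m, b j = 0)
    (hW : SecondStructural m l W) (p : ℝ) (hp : 1 < p) :
    ∃ C : ℝ≥0, ∀ F : ℕ → (ℕ → Fin m) → EuclideanSpace ℝ (Fin l),
      IsMartingaleFun m F → (⨆ n, eLpNorm (F n) 1 P) < ⊤ → MemW m l W F →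
      ∑' n : ℕ, ENNReal.ofReal ((m : ℝ) ^ (-(((p - 1) / p) * (n + 1 : ℕ)))) *
          eLpNorm (fun x => F (n + 1) x - F n x) (ENNReal.ofReal p) P ≤
        C * ⨆ n, eLpNorm (F n) 1 P :=
  martingale_besov_embedding_general m l hm P hPcyl W hWV hW p hp
end
end
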